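/- Let n ≥ 1 and κ ≥ 1 be integers, with κ ≥ 2 if p = 2. Let g, ḡ, h ∈ ℤ_p⟦t⟧ with h having constant term 1, and suppose the coefficient of t^i in Y(g) lies in ℤ_p for all 0 ≤ i ≤ n. If every coefficient of ∫(ḡ - g) lies in p^κℤ_p, then Y(ḡ) ≡ Y(g) (mod (p^κ, t^{n+1})), i.e. the coefficient of t^i in Y(ḡ) - Y(g) lies in p^κℤ_p for all 0 ≤ i ≤ n. -/

import Mathlib

/-!
With `L = ∫ h⁻¹`, the equation `y' = g · h(y)` integrates to `L(y) = ∫ g`, so the hypothesis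
says `L(ȳ) ≡ L(y) mod p^κ`. Writing `ȳ = y + δ`, Taylor expansion gives
`L(ȳ) - L(y) = h⁻¹(y) · δ + Σ_{k ≥ 2} L⁽ᵏ⁾(y) · δᵏ / k!`, where `h⁻¹(y)` is invertible with
integral inverse `h(y)` and `L⁽ᵏ⁾ = (h⁻¹)⁽ᵏ⁻¹⁾` is integral. As `δ(0) = 0` and `k ≥ 2`, the
coefficient of `tᵐ` in `δᵏ` only involves coefficients of `δ` below `m`, and `p^{kκ} / k!` still
lies in `p^κ ℤ_p` because `v_p(k!) ≤ k - 1`; so `δ ≡ 0 mod p^κ` by induction on the degree.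
-/

open PowerSeries

/-- Composition `h(u)` of formal power series, intended for `u` with zero constant term. -/
noncomputable def pcomp {R : Type*} [CommSemiring R] (h u : R⟦X⟧) : R⟦X⟧ :=
  PowerSeries.mk fun n => ∑ i ∈ Finset.range (n + 1), coeff i h * coeff n (u ^ i)

/-- Formal integral: the unique `F` with `F' = f` and `F(0) = 0`. -/
noncomputable def pint {K : Type*} [Field K] (f : K⟦X⟧) : K⟦X⟧ :=
  PowerSeries.mk fun n => if n = 0 then 0 else coeff (n - 1) f / (n : K)

open Finset
open scoped Nat

namespace PowerSeries

section Composition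

variable {R : Type*} [CommRing R] {u v : R⟦X⟧}

theorem X_pow_dvd_pow_of_constantCoeff_eq_zero (hu : constantCoeff u = 0) (N : ℕ) :
    X ^ N ∣ u ^ N :=
  pow_dvd_pow_of_dvd (X_dvd_iff.mpr hu) N

theorem coeff_pow_mul_pow_eq_zero_of_lt (hu : constantCoeff u = 0) (hv : constantCoeff v = 0)
    {m a k : ℕ} (h : m < a + k) : coeff m (u ^ a * v ^ k) = 0 := by
  refine X_pow_dvd_iff.mp ?_ m h
  rw [pow_add]
  exact mul_dvd_mul (X_pow_dvd_pow_of_constantCoeff_eq_zero hu a)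
    (X_pow_dvd_pow_of_constantCoeff_eq_zero hv k)

theorem coeff_pow_eq_zero_of_lt (hu : constantCoeff u = 0) {m N : ℕ} (h : m < N) :
    coeff m (u ^ N) = 0 :=
  X_pow_dvd_iff.mp (X_pow_dvd_pow_of_constantCoeff_eq_zero hu N) m h

theorem coeff_pcomp (F u : R⟦X⟧) (m : ℕ) :
    coeff m (pcomp F u) = ∑ N ∈ range (m + 1), coeff N F * coeff m (u ^ N) :=
  coeff_mk _ _

theorem constantCoeff_pcomp (F u : R⟦X⟧) : constantCoeff (pcomp F u) = constantCoeff F := by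
  rw [← coeff_zero_eq_constantCoeff_apply, coeff_pcomp]
  simp

theorem pcomp_eq_subst (hu : constantCoeff u = 0) (F : R⟦X⟧) : pcomp F u = F.subst u := by
  ext m
  rw [coeff_subst' (HasSubst.of_constantCoeff_zero' hu), coeff_pcomp,
    finsum_eq_sum_of_support_subset (s := range (m + 1))]
  · rfl
  · intro N hN
    simp only [Function.mem_support, coe_range, Set.mem_Iio] at hN ⊢
    by_contra hmN
    exact hN (by rw [coeff_pow_eq_zero_of_lt hu (by omega), smul_zero])

theorem pcomp_mul (hu : constantCoeff u = 0) (F G : R⟦X⟧) :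
    pcomp (F * G) u = pcomp F u * pcomp G u := by
  simp only [pcomp_eq_subst hu, subst_mul (HasSubst.of_constantCoeff_zero' hu)]

theorem pcomp_one (u : R⟦X⟧) : pcomp 1 u = 1 := by
  ext m
  rw [coeff_pcomp, sum_eq_single_of_mem 0 (by simp)]
  · simp [coeff_one]
  · intro N _ hN
    rw [coeff_one, if_neg hN, zero_mul]

theorem derivative_pcomp (hu : constantCoeff u = 0) (F : R⟦X⟧) :
    d⁄dX R (pcomp F u) = pcomp (d⁄dX R F) u * d⁄dX R u := by
  simp only [pcomp_eq_subst hu, derivative_subst (HasSubst.of_constantCoeff_zero' hu)]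

theorem coeff_pcomp_of_lt (hu : constantCoeff u = 0) (F : R⟦X⟧) {m M : ℕ} (hM : m < M) :
    coeff m (pcomp F u) = ∑ N ∈ range M, coeff N F * coeff m (u ^ N) := by
  rw [coeff_pcomp]
  refine sum_subset (range_subset_range.2 hM) fun N _ hN => ?_
  rw [coeff_pow_eq_zero_of_lt hu (by simpa using hN), mul_zero]

theorem coeff_pcomp_mul (hu : constantCoeff u = 0) (F w : R⟦X⟧) (m : ℕ) :
    coeff m (pcomp F u * w) = ∑ N ∈ range (m + 1), coeff N F * coeff m (u ^ N * w) := by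
  calc coeff m (pcomp F u * w)
      = ∑ x ∈ antidiagonal m, ∑ N ∈ range (m + 1),
          coeff N F * (coeff x.1 (u ^ N) * coeff x.2 w) := by
        rw [coeff_mul]
        refine sum_congr rfl fun x hx => ?_
        rw [coeff_pcomp_of_lt hu F (Nat.antidiagonal.fst_lt hx), sum_mul]
        simp only [mul_assoc]
    _ = ∑ N ∈ range (m + 1), coeff N F * coeff m (u ^ N * w) := by
        rw [sum_comm]
        simp only [← mul_sum, coeff_mul]

end Composition

section Taylor

variable {K : Type*} [Field K] [CharZero K] {u v : K⟦X⟧}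

theorem inv_factorial_mul_coeff_iterate_derivative (F : K⟦X⟧) (k a : ℕ) :
    (k ! : K)⁻¹ * coeff a ((d⁄dX K)^[k] F) = ((a + k).choose k : K) * coeff (a + k) F := by
  rw [coeff_iterate_derivative, Nat.ascFactorial_eq_factorial_mul_choose, Nat.cast_mul,
    ← mul_assoc, ← mul_assoc, inv_mul_cancel₀ (by exact_mod_cast k.factorial_ne_zero), one_mul]

theorem coeff_pcomp_add (hu : constantCoeff u = 0) (hv : constantCoeff v = 0) (F : K⟦X⟧)
    (m : ℕ) :
    coeff m (pcomp F (u + v)) =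
      ∑ k ∈ range (m + 1), (k ! : K)⁻¹ * coeff m (pcomp ((d⁄dX K)^[k] F) u * v ^ k) := by
  set f : ℕ → ℕ → K := fun k a =>
    ((a + k).choose k : K) * coeff (a + k) F * coeff m (u ^ a * v ^ k) with hf
  calc coeff m (pcomp F (u + v))
      = ∑ N ∈ range (m + 1), ∑ k ∈ range (N + 1), f k (N - k) := by
        rw [coeff_pcomp]
        refine sum_congr rfl fun N _ => ?_
        rw [add_comm u v, add_pow, map_sum, mul_sum]
        refine sum_congr rfl fun k hk => ?_
        have hkN : k ≤ N := Nat.lt_succ_iff.mp (mem_range.mp hk)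
        simp only [hf]
        rw [Nat.sub_add_cancel hkN, ← map_natCast (C (R := K)), coeff_mul_C,
          mul_comm (v ^ k)]
        ring
    _ = ∑ k ∈ range (m + 1), ∑ a ∈ range (m + 1 - k), f k a := sum_range_diag_flip _ _
    _ = ∑ k ∈ range (m + 1), ∑ a ∈ range (m + 1), f k a := by
        refine sum_congr rfl fun k _ => sum_subset (range_subset_range.2 (Nat.sub_le _ _)) ?_
        intro a _ ha
        simp only [hf]
        rw [coeff_pow_mul_pow_eq_zero_of_lt hu hv (by simp at ha; omega), mul_zero]
    _ = _ := by
        refine sum_congr rfl fun k _ => ?_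
        rw [coeff_pcomp_mul hu, mul_sum]
        refine sum_congr rfl fun a _ => ?_
        rw [← mul_assoc, inv_factorial_mul_coeff_iterate_derivative]

theorem coeff_pcomp_add_sub (hu : constantCoeff u = 0) (hv : constantCoeff v = 0)
    (F : K⟦X⟧) (m : ℕ) :
    coeff m (pcomp F (u + v) - pcomp F u - pcomp (d⁄dX K F) u * v) =
      ∑ k ∈ Ico 2 (m + 2), (k ! : K)⁻¹ * coeff m (pcomp ((d⁄dX K)^[k] F) u * v ^ k) := by
  have hlast : coeff m (pcomp ((d⁄dX K)^[m + 1] F) u * v ^ (m + 1)) = 0 :=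
    X_pow_dvd_iff.mp (dvd_mul_of_dvd_right (X_pow_dvd_pow_of_constantCoeff_eq_zero hv _) _) m
      m.lt_succ_self
  rw [map_sub, map_sub, coeff_pcomp_add hu hv, ← add_zero (∑ k ∈ range (m + 1), _),
    ← mul_zero ((m + 1)! : K)⁻¹, ← hlast, ← sum_range_succ, range_eq_Ico,
    sum_eq_sum_Ico_succ_bot (by omega), sum_eq_sum_Ico_succ_bot (by omega)]
  simp

end Taylor

section Integral

variable {K : Type*} [Field K]

theorem coeff_pint (f : K⟦X⟧) (m : ℕ) :
    coeff m (pint f) = if m = 0 then 0 else coeff (m - 1) f / m :=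
  coeff_mk _ _

theorem constantCoeff_pint (f : K⟦X⟧) : constantCoeff (pint f) = 0 := by
  simp [← coeff_zero_eq_constantCoeff_apply, coeff_pint]

theorem derivative_pint [CharZero K] (f : K⟦X⟧) : d⁄dX K (pint f) = f := by
  ext m
  rw [coeff_derivative, coeff_pint, if_neg m.succ_ne_zero, Nat.add_sub_cancel, Nat.cast_succ,
    div_mul_cancel₀ _ (by exact_mod_cast m.succ_ne_zero)]

theorem pint_sub (f g : K⟦X⟧) : pint (f - g) = pint f - pint g := by
  ext m
  simp only [coeff_pint, map_sub]
  split_ifs <;> ring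

theorem pcomp_pint_inv_eq_pint [CharZero K] {g h y : K⟦X⟧} (hh : constantCoeff h ≠ 0)
    (hy0 : constantCoeff y = 0) (hy : d⁄dX K y = g * pcomp h y) : pcomp (pint h⁻¹) y = pint g := by
  refine derivative.ext ?_ (by rw [constantCoeff_pcomp, constantCoeff_pint, constantCoeff_pint])
  rw [derivative_pcomp hy0, derivative_pint, derivative_pint, hy, mul_left_comm, ← pcomp_mul hy0,
    PowerSeries.inv_mul_cancel _ hh, pcomp_one, mul_one]

end Integral

section Ultrametric

variable {K : Type*} [NormedField K] [IsUltrametricDist K] {n : ℕ} {a b c : ℝ}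

theorem norm_coeff_mul_le {f g : K⟦X⟧} (hf : ∀ i ≤ n, ‖coeff i f‖ ≤ a)
    (hg : ∀ i ≤ n, ‖coeff i g‖ ≤ b) : ∀ i ≤ n, ‖coeff i (f * g)‖ ≤ a * b := by
  intro i hi
  rw [coeff_mul]
  refine IsUltrametricDist.norm_sum_le_of_forall_le_of_nonempty ⟨(0, i), by simp⟩ fun x hx => ?_
  rw [norm_mul]
  exact mul_le_mul (hf _ ((HasAntidiagonal.antidiagonal.fst_le hx).trans hi))
    (hg _ ((HasAntidiagonal.antidiagonal.snd_le hx).trans hi)) (norm_nonneg _)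
    ((norm_nonneg _).trans (hf 0 n.zero_le))

theorem norm_coeff_pow_le {f : K⟦X⟧} (hf : ∀ i ≤ n, ‖coeff i f‖ ≤ a) (k : ℕ) :
    ∀ i ≤ n, ‖coeff i (f ^ k)‖ ≤ a ^ k := by
  induction k with
  | zero =>
    intro i _
    rw [pow_zero, pow_zero, coeff_one]
    split_ifs <;> simp
  | succ k ih => simpa only [pow_succ] using norm_coeff_mul_le ih hf

theorem norm_coeff_pow_le_of_forall_lt {v : K⟦X⟧} {m : ℕ} (hv : constantCoeff v = 0)
    (hc : 0 ≤ c) (hb : ∀ i < m, ‖coeff i v‖ ≤ c) {k : ℕ} (hk : 2 ≤ k) :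
    ∀ j ≤ m, ‖coeff j (v ^ k)‖ ≤ c ^ k := by
  obtain ⟨w, rfl⟩ := X_dvd_iff.mpr hv
  intro j hj
  rw [mul_pow, coeff_X_pow_mul']
  split_ifs with hkj
  · have hw : ∀ i ≤ m - 2, ‖coeff i w‖ ≤ c := fun i hi => by
      simpa [coeff_succ_X_mul] using hb (i + 1) (by omega)
    exact norm_coeff_pow_le hw k (j - k) (by omega)
  · simpa using pow_nonneg hc k

theorem norm_coeff_pcomp_le_one {F u : K⟦X⟧} (hF : ∀ i, ‖coeff i F‖ ≤ 1)
    (hu : ∀ i ≤ n, ‖coeff i u‖ ≤ 1) : ∀ i ≤ n, ‖coeff i (pcomp F u)‖ ≤ 1 := by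
  intro i hi
  rw [coeff_pcomp]
  refine IsUltrametricDist.norm_sum_le_of_forall_le_of_nonneg zero_le_one fun N _ => ?_
  rw [norm_mul]
  exact mul_le_one₀ (hF N) (norm_nonneg _) (by simpa using norm_coeff_pow_le hu N i hi)

theorem norm_coeff_inv_le_one {h : K⟦X⟧} (h1 : constantCoeff h = 1)
    (hh : ∀ i, ‖coeff i h‖ ≤ 1) (i : ℕ) : ‖coeff i h⁻¹‖ ≤ 1 := by
  induction i using Nat.strong_induction_on with
  | _ i ih =>
    rw [coeff_inv, h1, inv_one]
    split_ifs
    · exact norm_one.le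
    rw [neg_one_mul, norm_neg]
    refine IsUltrametricDist.norm_sum_le_of_forall_le_of_nonneg zero_le_one fun x hx => ?_
    split_ifs with hx2
    · rw [norm_mul]
      exact mul_le_one₀ (hh _) (norm_nonneg _) (ih _ hx2)
    · simp

theorem norm_coeff_iterate_derivative_le_one {F : K⟦X⟧} (hF : ∀ i, ‖coeff i F‖ ≤ 1)
    (k i : ℕ) : ‖coeff i ((d⁄dX K)^[k] F)‖ ≤ 1 := by
  rw [coeff_iterate_derivative, norm_mul]
  exact mul_le_one₀ (IsUltrametricDist.norm_natCast_le_one K _) (norm_nonneg _) (hF _)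

end Ultrametric

end PowerSeries

theorem Padic.norm_inv_factorial_le {p : ℕ} [hp : Fact p.Prime] (k : ℕ) :
    ‖((k ! : ℚ_[p]))⁻¹‖ ≤ (p : ℝ) ^ (k - 1) := by
  have hv : padicValNat p k ! ≤ k - 1 := by
    rcases k.eq_zero_or_pos with rfl | hk
    · simp
    · have := padicValNat_factorial_lt_of_ne_zero p hk.ne'
      omega
  rw [norm_inv, Padic.norm_eq_zpow_neg_valuation (by exact_mod_cast k.factorial_ne_zero),
    Padic.valuation_natCast, zpow_neg, inv_inv, zpow_natCast]
  exact pow_le_pow_right₀ (Nat.one_le_cast.mpr hp.out.one_lt.le) hv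

section Stability

variable {p : ℕ} [Fact p.Prime] {n m : ℕ} {c : ℝ} {L y : ℚ_[p]⟦X⟧}

theorem norm_coeff_pcomp_add_sub_le {δ : ℚ_[p]⟦X⟧} (hc : 0 ≤ c) (hpc : p * c ≤ 1)
    (hL : ∀ i, ‖coeff i (d⁄dX _ L)‖ ≤ 1) (hy0 : constantCoeff y = 0)
    (hδ0 : constantCoeff δ = 0) (hy : ∀ i ≤ n, ‖coeff i y‖ ≤ 1) (hmn : m ≤ n)
    (hδ : ∀ i < m, ‖coeff i δ‖ ≤ c) :
    ∀ j ≤ m, ‖coeff j (pcomp L (y + δ) - pcomp L y - pcomp (d⁄dX _ L) y * δ)‖ ≤ c := by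
  intro j hj
  rw [coeff_pcomp_add_sub hy0 hδ0]
  refine IsUltrametricDist.norm_sum_le_of_forall_le_of_nonneg hc fun k hk => ?_
  obtain ⟨hk2, -⟩ := mem_Ico.mp hk
  have hLk : ∀ i, ‖coeff i ((d⁄dX _)^[k] L)‖ ≤ 1 := by
    obtain ⟨k, rfl⟩ := Nat.exists_eq_add_of_le' (by omega : 1 ≤ k)
    simpa only [Function.iterate_succ_apply] using norm_coeff_iterate_derivative_le_one hL k
  have hterm : ‖coeff j (pcomp ((d⁄dX _)^[k] L) y * δ ^ k)‖ ≤ 1 * c ^ k :=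
    norm_coeff_mul_le (fun i hi => norm_coeff_pcomp_le_one hLk hy i (hi.trans hmn))
      (norm_coeff_pow_le_of_forall_lt hδ0 hc hδ hk2) j hj
  calc ‖(k ! : ℚ_[p])⁻¹ * coeff j (pcomp ((d⁄dX _)^[k] L) y * δ ^ k)‖
      ≤ (p : ℝ) ^ (k - 1) * c ^ k := by
        rw [norm_mul]
        exact mul_le_mul (Padic.norm_inv_factorial_le k) (by simpa using hterm) (norm_nonneg _)
          (by positivity)
    _ = (p * c) ^ (k - 1) * c := by
        rw [mul_pow, mul_assoc, pow_sub_one_mul (by omega)]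
    _ ≤ c := mul_le_of_le_one_left hc (pow_le_one₀ (by positivity) hpc)

theorem norm_coeff_sub_le_of_norm_coeff_pcomp_sub_le {ybar : ℚ_[p]⟦X⟧} (hc : 0 ≤ c)
    (hpc : p * c ≤ 1) (hL : ∀ i, ‖coeff i (d⁄dX _ L)‖ ≤ 1) (hL1 : constantCoeff (d⁄dX _ L) = 1)
    (hy0 : constantCoeff y = 0) (hybar0 : constantCoeff ybar = 0)
    (hy : ∀ i ≤ n, ‖coeff i y‖ ≤ 1)
    (hE : ∀ i ≤ n, ‖coeff i (pcomp L ybar - pcomp L y)‖ ≤ c) :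
    ∀ i ≤ n, ‖coeff i (ybar - y)‖ ≤ c := by
  set G := d⁄dX _ L
  set δ := ybar - y with hδ_def
  have hδ0 : constantCoeff δ = 0 := by rw [hδ_def, map_sub, hy0, hybar0, sub_zero]
  have hybar : ybar = y + δ := (add_sub_cancel y ybar).symm
  have hδ : δ = pcomp G⁻¹ y *
      ((pcomp L ybar - pcomp L y) - (pcomp L (y + δ) - pcomp L y - pcomp G y * δ)) := by
    rw [← hybar, sub_sub_cancel, ← mul_assoc, ← pcomp_mul hy0,
      PowerSeries.inv_mul_cancel _ (by rw [hL1]; exact one_ne_zero), pcomp_one, one_mul]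
  have hGinv : ∀ i ≤ n, ‖coeff i (pcomp G⁻¹ y)‖ ≤ 1 :=
    norm_coeff_pcomp_le_one (norm_coeff_inv_le_one hL1 hL) hy
  intro m hm
  induction m using Nat.strong_induction_on with
  | _ m ih =>
    have hR := norm_coeff_pcomp_add_sub_le hc hpc hL hy0 hδ0 hy hm fun i hi => ih i hi (by omega)
    rw [hδ]
    simpa using norm_coeff_mul_le (fun i hi => hGinv i (hi.trans hm))
      (fun i hi => by
        rw [map_sub, sub_eq_add_neg]
        exact (IsUltrametricDist.norm_add_le_max _ _).trans
          (max_le (hE i (hi.trans hm)) ((norm_neg _).trans_le (hR i hi)))) m le_rfl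

end Stability

/-- `x ∈ p^κ ℤ_p` is encoded as `‖x‖ ≤ p^{-κ}`, and `f ∈ ℤ_p⟦t⟧` as `‖coeff i f‖ ≤ 1` for
all `i`. -/
theorem stmt7 (p : ℕ) [hp : Fact p.Prime] (n κ : ℕ) (hκ : 1 ≤ κ)
    (g gbar h : PowerSeries ℚ_[p])
    (hhint : ∀ i, ‖coeff i h‖ ≤ 1) (hh1 : constantCoeff h = 1)
    (y ybar : PowerSeries ℚ_[p])
    (hy0 : constantCoeff y = 0) (hy : derivativeFun y = g * pcomp h y)
    (hybar0 : constantCoeff ybar = 0) (hybar : derivativeFun ybar = gbar * pcomp h ybar)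
    (hyint : ∀ i ≤ n, ‖coeff i y‖ ≤ 1)
    (hdiff : ∀ i, ‖coeff i (pint (gbar - g))‖ ≤ (p : ℝ) ^ (-(κ : ℤ))) :
    ∀ i ≤ n, ‖coeff i (ybar - y)‖ ≤ (p : ℝ) ^ (-(κ : ℤ)) := by
  have hh0 : constantCoeff h ≠ 0 := by rw [hh1]; exact one_ne_zero
  have hL : d⁄dX _ (pint h⁻¹) = h⁻¹ := derivative_pint _
  have hpκ : (p : ℝ) * (p : ℝ) ^ (-(κ : ℤ)) ≤ 1 := by
    rw [← zpow_one_add₀ (by exact_mod_cast hp.out.ne_zero)]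
    exact zpow_le_one_of_nonpos₀ (Nat.one_le_cast.mpr hp.out.one_lt.le) (by omega)
  refine norm_coeff_sub_le_of_norm_coeff_pcomp_sub_le (L := pint h⁻¹) (by positivity) hpκ
    (by rw [hL]; exact norm_coeff_inv_le_one hh1 hhint)
    (by rw [hL, constantCoeff_inv, hh1, inv_one]) hy0 hybar0 hyint ?_
  rw [pcomp_pint_inv_eq_pint hh0 hybar0 hybar, pcomp_pint_inv_eq_pint hh0 hy0 hy, ← pint_sub]
  exact fun i _ => hdiff i
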